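/- Let (M,g) be an m-dimensional asymptotic harmonic manifold up to order 2 (satisfying H₁ and H₂). Then R_{iabc}R_{jabc} = (|R|²/m) g_{ij}, i.e. M is super-Einstein, and |R|² is constant on M. -/

import Mathlib

/-!
Contract `H₂` over its last two indices. Since `Q_{ijkl} = R_{aijb}R_{bkla}` is invariant under
`ijkl ↦ klij` and `ijkl ↦ jilk`, the contracted symmetrization is four times a sum of six
contractions of `Q`. By `H₁` two of them equal `Λ₁² g_{ij}`; the other four add up to
`3 R_{iabc}R_{jabc}`, directly or through the first Bianchi identity. The same count applied to
`g_{ij}g_{kl}` gives `(8m + 16) g_{ij}`, hence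
`12 R_{iabc}R_{jabc} + 8Λ₁² g_{ij} = (8m + 16)Λ₂ g_{ij}`: the tensor `R_{iabc}R_{jabc}` is a
fixed multiple of the metric, and its trace `|R|²` is constant.
-/

open scoped BigOperators

/-- Kronecker delta (the metric in a local orthonormal frame). -/
def kd {m : ℕ} (i j : Fin m) : ℝ := if i = j then 1 else 0

/-- The pointwise curvature data (the Riemann curvature tensor together with its
first and second covariant derivatives, expressed in a local orthonormal frame)
of an `m`-dimensional Riemannian manifold `M`, subject to the standard
symmetries, the first and second Bianchi identities and the Ricci commutation
identity.  The sign convention is `R(X,Y)Z = [∇_X,∇_Y]Z − ∇_{[X,Y]}Z`. -/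
structure RiemannModel (m : ℕ) (M : Type) where
  R : M → Fin m → Fin m → Fin m → Fin m → ℝ
  dR : M → Fin m → Fin m → Fin m → Fin m → Fin m → ℝ
  d2R : M → Fin m → Fin m → Fin m → Fin m → Fin m → Fin m → ℝ
  R_antisymm₁ : ∀ p a b c d, R p b a c d = - R p a b c d
  R_antisymm₂ : ∀ p a b c d, R p a b d c = - R p a b c d
  R_pairSymm : ∀ p a b c d, R p c d a b = R p a b c d
  R_bianchi₁ : ∀ p a b c d, R p a b c d + R p b c a d + R p c a b d = 0
  dR_antisymm₁ : ∀ p a b c d e, dR p b a c d e = - dR p a b c d e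
  dR_antisymm₂ : ∀ p a b c d e, dR p a b d c e = - dR p a b c d e
  dR_pairSymm : ∀ p a b c d e, dR p c d a b e = dR p a b c d e
  dR_bianchi₁ : ∀ p a b c d e, dR p a b c d e + dR p b c a d e + dR p c a b d e = 0
  bianchi₂ : ∀ p a b c d e, dR p a b c d e + dR p a b d e c + dR p a b e c d = 0
  d2R_antisymm₁ : ∀ p a b c d e f, d2R p b a c d e f = - d2R p a b c d e f
  d2R_antisymm₂ : ∀ p a b c d e f, d2R p a b d c e f = - d2R p a b c d e f
  d2R_pairSymm : ∀ p a b c d e f, d2R p c d a b e f = d2R p a b c d e f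
  d2R_bianchi₂ : ∀ p a b c d e f,
    d2R p a b c d e f + d2R p a b d e c f + d2R p a b e c d f = 0
  ricci_comm : ∀ p a b c d e f,
    d2R p a b c d e f - d2R p a b c d f e =
      ∑ u, (R p e f a u * R p u b c d + R p e f b u * R p a u c d +
            R p e f c u * R p a b u d + R p e f d u * R p a b c u)

namespace RiemannModel

variable {m : ℕ} {M : Type} (V : RiemannModel m M)

/-- Ricci tensor `ρ_{ij} = R_{aija}`. -/
def ric (p : M) (i j : Fin m) : ℝ := ∑ a, V.R p a i j a

/-- Scalar curvature `τ`. -/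
def scal (p : M) : ℝ := ∑ i, V.ric p i i

/-- `|R|² = R_{abcd}R_{abcd}`. -/
def normR2 (p : M) : ℝ := ∑ a, ∑ b, ∑ c, ∑ d, (V.R p a b c d) ^ 2

/-- `|ρ|² = ρ_{ab}ρ_{ab}`. -/
def normRic2 (p : M) : ℝ := ∑ a, ∑ b, (V.ric p a b) ^ 2

/-- `|∇R|² = R_{abcd;e}R_{abcd;e}`. -/
def normDR2 (p : M) : ℝ := ∑ a, ∑ b, ∑ c, ∑ d, ∑ e, (V.dR p a b c d e) ^ 2

/-- `R_{iabc}R_{jabc}`. -/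
def RR2 (p : M) (i j : Fin m) : ℝ := ∑ a, ∑ b, ∑ c, V.R p i a b c * V.R p j a b c

/-- `R̂ = R_{abcd}R_{abuv}R_{cduv}`. -/
def Rhat (p : M) : ℝ :=
  ∑ a, ∑ b, ∑ c, ∑ d, ∑ u, ∑ v, V.R p a b c d * V.R p a b u v * V.R p c d u v

/-- `R̊ = R_{abcd}R_{aucv}R_{budv}`. -/
def Rring (p : M) : ℝ :=
  ∑ a, ∑ b, ∑ c, ∑ d, ∑ u, ∑ v, V.R p a b c d * V.R p a u c v * V.R p b u d v

/-- `R̂_{ij} = R_{ibac}R_{jbuv}R_{acuv}`. -/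
def RhatT (p : M) (i j : Fin m) : ℝ :=
  ∑ a, ∑ b, ∑ c, ∑ u, ∑ v, V.R p i b a c * V.R p j b u v * V.R p a c u v

/-- `R̊_{ij} = R_{iabc}R_{jubv}R_{aucv}`. -/
def RringT (p : M) (i j : Fin m) : ℝ :=
  ∑ a, ∑ b, ∑ c, ∑ u, ∑ v, V.R p i a b c * V.R p j u b v * V.R p a u c v

/-- `Ř_{ij} = R_{iuvj}R_{abcu}R_{abcv}`. -/
def RcheckT (p : M) (i j : Fin m) : ℝ :=
  ∑ u, ∑ v, ∑ a, ∑ b, ∑ c, V.R p i u v j * V.R p a b c u * V.R p a b c v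

/-- `A_{ij} = R_{abcd;i}R_{abcd;j}`. -/
def At (p : M) (i j : Fin m) : ℝ :=
  ∑ a, ∑ b, ∑ c, ∑ d, V.dR p a b c d i * V.dR p a b c d j

/-- `B_{ij} = R_{ibcd;a}R_{jbcd;a}`. -/
def Bt (p : M) (i j : Fin m) : ℝ :=
  ∑ a, ∑ b, ∑ c, ∑ d, V.dR p i b c d a * V.dR p j b c d a

/-- Second covariant derivative of the Ricci tensor, `ρ_{ij;ab}`. -/
def ric2 (p : M) (i j a b : Fin m) : ℝ := ∑ u, V.d2R p u i j u a b

/-- `Q_{ijkl} = R_{aijb}R_{bkla}`. -/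
def Q (p : M) (i j k l : Fin m) : ℝ := ∑ a, ∑ b, V.R p a i j b * V.R p b k l a

/-- The integrand of condition `H₃`:
`32 R_{aijb}R_{bklc}R_{cuva} − 9 R_{aijb;k}R_{buva;l}`. -/
def C (p : M) (i j k l u v : Fin m) : ℝ :=
  32 * (∑ a, ∑ b, ∑ c, V.R p a i j b * V.R p b k l c * V.R p c u v a)
    - 9 * (∑ a, ∑ b, V.dR p a i j b k * V.dR p b u v a l)

/-- `𝔖(g_{ij}g_{kl})` : symmetrization over all permutations of `i,j,k,l`. -/
def symG2 {m : ℕ} (i j k l : Fin m) : ℝ :=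
  ∑ σ : Equiv.Perm (Fin 4),
    kd (![i,j,k,l] (σ 0)) (![i,j,k,l] (σ 1)) *
      kd (![i,j,k,l] (σ 2)) (![i,j,k,l] (σ 3))

/-- `𝔖(R_{aijb}R_{bkla})` : symmetrization over all permutations of `i,j,k,l`. -/
def symQ (p : M) (i j k l : Fin m) : ℝ :=
  ∑ σ : Equiv.Perm (Fin 4),
    V.Q p (![i,j,k,l] (σ 0)) (![i,j,k,l] (σ 1)) (![i,j,k,l] (σ 2)) (![i,j,k,l] (σ 3))

/-- `𝔖(g_{ij}g_{kl}g_{uv})`. -/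
def symG3 {m : ℕ} (i j k l u v : Fin m) : ℝ :=
  ∑ σ : Equiv.Perm (Fin 6),
    kd (![i,j,k,l,u,v] (σ 0)) (![i,j,k,l,u,v] (σ 1)) *
      kd (![i,j,k,l,u,v] (σ 2)) (![i,j,k,l,u,v] (σ 3)) *
        kd (![i,j,k,l,u,v] (σ 4)) (![i,j,k,l,u,v] (σ 5))

/-- `𝔖(32R_{aijb}R_{bklc}R_{cuva} − 9R_{aijb;k}R_{buva;l})`. -/
def symC (p : M) (i j k l u v : Fin m) : ℝ :=
  ∑ σ : Equiv.Perm (Fin 6),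
    V.C p (![i,j,k,l,u,v] (σ 0)) (![i,j,k,l,u,v] (σ 1)) (![i,j,k,l,u,v] (σ 2))
      (![i,j,k,l,u,v] (σ 3)) (![i,j,k,l,u,v] (σ 4)) (![i,j,k,l,u,v] (σ 5))

/-- Ledger's condition `H₁`. -/
def H1 : Prop := ∃ Λ : ℝ, ∀ p i j, V.ric p i j = Λ * kd i j

/-- Ledger's condition `H₂`. -/
def H2 : Prop := ∃ Λ : ℝ, ∀ p i j k l, V.symQ p i j k l = Λ * symG2 i j k l

/-- Ledger's condition `H₃`. -/
def H3 : Prop :=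
  ∃ Λ : ℝ, ∀ p i j k l u v, V.symC p i j k l u v = Λ * symG3 i j k l u v

/-- The Einstein condition `ρ_{ij} = (τ/m) g_{ij}`. -/
def einstein : Prop := ∀ p i j, V.ric p i j = V.scal p / m * kd i j

end RiemannModel

theorem sum_perm_fin_four (g : Fin 4 → Fin 4 → Fin 4 → Fin 4 → ℝ) :
    ∑ σ : Equiv.Perm (Fin 4), g (σ 0) (σ 1) (σ 2) (σ 3) =
      g 0 1 2 3 + g 0 1 3 2 + (g 0 2 1 3 + g 0 2 3 1 + (g 0 3 2 1 + g 0 3 1 2)) +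
        (g 1 0 2 3 + g 1 0 3 2 + (g 1 2 0 3 + g 1 2 3 0 + (g 1 3 2 0 + g 1 3 0 2)) +
          (g 2 1 0 3 + g 2 1 3 0 + (g 2 0 1 3 + g 2 0 3 1 + (g 2 3 0 1 + g 2 3 1 0)) +
            (g 3 1 2 0 + g 3 1 0 2 +
              (g 3 2 1 0 + g 3 2 0 1 + (g 3 0 2 1 + g 3 0 1 2))))) := by
  simp only [show (1 : Fin 4) = (0 : Fin 3).succ from rfl,
    show (2 : Fin 4) = (1 : Fin 3).succ from rfl, show (3 : Fin 4) = (2 : Fin 3).succ from rfl,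
    show (1 : Fin 3) = (0 : Fin 2).succ from rfl, show (2 : Fin 3) = (1 : Fin 2).succ from rfl,
    show (1 : Fin 2) = (0 : Fin 1).succ from rfl]
  simp +decide only [Finset.univ_perm_fin_succ, Finset.sum_map,
    Fintype.sum_prod_type, Fin.sum_univ_succ, Finset.univ_unique, Finset.sum_singleton,
    Equiv.Perm.decomposeFin_symm_apply_zero, Equiv.Perm.decomposeFin_symm_apply_succ,
    Equiv.swap_apply_def, if_true, if_false, Function.Embedding.coeFn_mk]
  rfl

def sym4 {ι : Type*} (g : ι → ι → ι → ι → ℝ) (i j k l : ι) : ℝ :=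
  ∑ σ : Equiv.Perm (Fin 4),
    g (![i,j,k,l] (σ 0)) (![i,j,k,l] (σ 1)) (![i,j,k,l] (σ 2)) (![i,j,k,l] (σ 3))

/-- Each of the twelve arrangements of `i, j, t, t` occurs twice in the symmetrization, and the
symmetries of `g` identify them in pairs. -/
theorem sum_sym4_contract_34 {ι : Type*} [Fintype ι] (g : ι → ι → ι → ι → ℝ)
    (hpair : ∀ i j k l, g i j k l = g k l i j) (hswap : ∀ i j k l, g i j k l = g j i l k)
    (i j : ι) :
    ∑ t, sym4 g i j t t =
      4 * ∑ t, (g i j t t + g j i t t + g i t j t + g j t i t + g i t t j + g j t t i) := by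
  rw [Finset.mul_sum]
  refine Finset.sum_congr rfl fun t _ => ?_
  rw [sym4, sum_perm_fin_four fun a b c d =>
    g (![i,j,t,t] a) (![i,j,t,t] b) (![i,j,t,t] c) (![i,j,t,t] d)]
  simp only [Matrix.cons_val]
  linear_combination 2 * (hpair t t i j + hpair t t j i + hswap t i t j + hswap t j t i +
    hpair t i j t + hpair t j i t)

theorem sum_sum_sum_rev {ι : Type*} [Fintype ι] (f : ι → ι → ι → ℝ) :
    ∑ x, ∑ y, ∑ z, f x y z = ∑ z, ∑ y, ∑ x, f x y z :=
  calc ∑ x, ∑ y, ∑ z, f x y z = ∑ y, ∑ x, ∑ z, f x y z := Finset.sum_comm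
    _ = ∑ y, ∑ z, ∑ x, f x y z := Finset.sum_congr rfl fun _ _ => Finset.sum_comm
    _ = ∑ z, ∑ y, ∑ x, f x y z := Finset.sum_comm

theorem kd_comm {m : ℕ} (i j : Fin m) : kd i j = kd j i := by
  simp only [kd, eq_comm]

theorem sum_kd_mul {m : ℕ} (a : Fin m) (f : Fin m → ℝ) : ∑ t, kd a t * f t = f a := by
  simp [kd]

theorem sum_mul_kd {m : ℕ} (a : Fin m) (f : Fin m → ℝ) : ∑ t, f t * kd a t = f a := by
  simp [kd]

theorem sum_kd_self {m : ℕ} : ∑ t : Fin m, kd t t = m := by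
  simp [kd]

namespace RiemannModel

theorem symG2_eq_sym4 {m : ℕ} (i j k l : Fin m) :
    symG2 i j k l = sym4 (fun a b c d => kd a b * kd c d) i j k l :=
  rfl

theorem sum_symG2_contract_34 {m : ℕ} (i j : Fin m) :
    ∑ t, symG2 i j t t = (8 * m + 16) * kd i j := by
  simp only [symG2_eq_sym4]
  rw [sum_sym4_contract_34 _ (fun _ _ _ _ => mul_comm _ _)
    (fun a b c d => by rw [kd_comm a, kd_comm c])]
  simp only [Finset.sum_add_distrib, ← Finset.mul_sum, sum_kd_self, sum_kd_mul,
    kd_comm j i]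
  ring

variable {m : ℕ} {M : Type} (V : RiemannModel m M) (p : M)

theorem R_reverse (a b c d : Fin m) : V.R p a b c d = V.R p d c b a := by
  rw [← V.R_pairSymm p d c b a, V.R_antisymm₁, V.R_antisymm₂, neg_neg]

theorem sum_R_contract_23 (a b : Fin m) : ∑ t, V.R p b t t a = V.ric p a b :=
  Finset.sum_congr rfl fun t _ => V.R_pairSymm p t a b t

theorem RR2_comm (i j : Fin m) : V.RR2 p i j = V.RR2 p j i := by
  simp only [RR2, mul_comm]

theorem normR2_eq_sum_RR2 : V.normR2 p = ∑ i, V.RR2 p i i := by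
  simp only [normR2, RR2, pow_two]

theorem Q_pair (i j k l : Fin m) : V.Q p i j k l = V.Q p k l i j := by
  rw [Q, Finset.sum_comm]
  simp only [Q, mul_comm]

theorem Q_swap (i j k l : Fin m) : V.Q p i j k l = V.Q p j i l k := by
  rw [Q, Finset.sum_comm]
  simp only [Q, V.R_reverse p _ i j, V.R_reverse p _ k l]

theorem sum_Q_contract_34_of_ric_eq {Λ : ℝ} (hρ : ∀ a b, V.ric p a b = Λ * kd a b)
    (i j : Fin m) : ∑ t, V.Q p i j t t = Λ ^ 2 * kd i j :=
  calc ∑ t, V.Q p i j t t = ∑ a, ∑ b, V.R p a i j b * ∑ t, V.R p b t t a := by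
        simp only [Q, Finset.mul_sum]
        rw [Finset.sum_comm]
        exact Finset.sum_congr rfl fun _ _ => Finset.sum_comm
    _ = Λ * ∑ a, V.R p a i j a := by
        simp only [sum_R_contract_23, hρ, mul_left_comm _ Λ, ← Finset.mul_sum, sum_mul_kd]
    _ = Λ ^ 2 * kd i j := by
        rw [show ∑ a, V.R p a i j a = V.ric p i j from rfl, hρ]
        ring

theorem sum_Q_contract_23 (i j : Fin m) : ∑ t, V.Q p i t t j = V.RR2 p i j := by
  simp only [Q, RR2]
  rw [Finset.sum_comm]
  refine Finset.sum_congr rfl fun a _ => Finset.sum_congr rfl fun t _ =>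
    Finset.sum_congr rfl fun b _ => ?_
  rw [V.R_antisymm₁ p i a, V.R_pairSymm p j a b t, V.R_antisymm₂ p j a t b]
  ring

/-- The first Bianchi identity `R_{bjta} = R_{btja} - R_{jtba}` reduces this contraction to
`sum_Q_contract_23`, up to a term equal to the contraction itself. -/
theorem two_mul_sum_Q_contract_24 (i j : Fin m) :
    2 * ∑ t, V.Q p i t j t = V.RR2 p i j := by
  have hbianchi : ∀ t a b, V.R p b j t a = V.R p b t j a - V.R p j t b a := fun t a b => by
    linear_combination V.R_bianchi₁ p b j t a - V.R_antisymm₁ p b t j a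
  have hsplit : ∑ t, V.Q p i t j t =
      ∑ t, V.Q p i t t j - ∑ t, ∑ a, ∑ b, V.R p a i t b * V.R p j t b a := by
    simp only [Q, hbianchi, mul_sub, Finset.sum_sub_distrib]
  have hrest : ∑ t, ∑ a, ∑ b, V.R p a i t b * V.R p j t b a = ∑ t, V.Q p i t j t := by
    rw [sum_sum_sum_rev]
    refine Finset.sum_congr rfl fun t _ => Finset.sum_congr rfl fun a _ =>
      Finset.sum_congr rfl fun b _ => ?_
    rw [V.R_antisymm₂ p a i t b, V.R_antisymm₁ p b j t a]
    ring
  linear_combination hsplit - hrest + V.sum_Q_contract_23 p i j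

theorem sum_symQ_contract_34_of_ric_eq {Λ : ℝ} (hρ : ∀ a b, V.ric p a b = Λ * kd a b)
    (i j : Fin m) : ∑ t, V.symQ p i j t t = 8 * Λ ^ 2 * kd i j + 12 * V.RR2 p i j := by
  rw [show V.symQ p = sym4 (V.Q p) from rfl, sum_sym4_contract_34 _ (V.Q_pair p) (V.Q_swap p)]
  simp only [Finset.sum_add_distrib]
  rw [V.sum_Q_contract_34_of_ric_eq p hρ, V.sum_Q_contract_34_of_ric_eq p hρ,
    V.sum_Q_contract_23, V.sum_Q_contract_23, V.RR2_comm p j i, kd_comm j i]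
  linear_combination 2 * V.two_mul_sum_Q_contract_24 p i j +
    2 * V.two_mul_sum_Q_contract_24 p j i + 2 * V.RR2_comm p j i

theorem RR2_eq_of_H2 {Λ₁ Λ₂ : ℝ} (hρ : ∀ a b, V.ric p a b = Λ₁ * kd a b)
    (hQ : ∀ i j k l, V.symQ p i j k l = Λ₂ * symG2 i j k l) (i j : Fin m) :
    V.RR2 p i j = ((8 * m + 16) * Λ₂ - 8 * Λ₁ ^ 2) / 12 * kd i j := by
  have h := V.sum_symQ_contract_34_of_ric_eq p hρ i j
  simp only [hQ, ← Finset.mul_sum, sum_symG2_contract_34] at h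
  linear_combination -h / 12

end RiemannModel

theorem superEinstein_of_order2_general {m : ℕ} {M : Type}
    (V : RiemannModel m M) (Λ₁ Λ₂ : ℝ)
    (h1 : ∀ p i j, V.ric p i j = Λ₁ * kd i j)
    (h2 : ∀ p i j k l, V.symQ p i j k l = Λ₂ * RiemannModel.symG2 i j k l) :
    (∀ p i j, V.RR2 p i j = V.normR2 p / m * kd i j) ∧
      (∀ p q : M, V.normR2 p = V.normR2 q) := by
  set c : ℝ := ((8 * m + 16) * Λ₂ - 8 * Λ₁ ^ 2) / 12
  have hRR2 : ∀ p i j, V.RR2 p i j = c * kd i j := fun p =>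
    V.RR2_eq_of_H2 p (h1 p) (h2 p)
  have hnorm : ∀ p, V.normR2 p = c * m := fun p => by
    simp only [V.normR2_eq_sum_RR2, hRR2, ← Finset.mul_sum, sum_kd_self]
  refine ⟨fun p i j => ?_, fun p q => by rw [hnorm, hnorm]⟩
  have hm : (m : ℝ) ≠ 0 := Nat.cast_ne_zero.mpr i.pos.ne'
  rw [hRR2, hnorm, mul_div_cancel_right₀ _ hm]

/-- an asymptotic harmonic manifold up to order 2 (conditions `H₁`
and `H₂`) is super-Einstein, `R_{iabc}R_{jabc} = (|R|²/m) g_{ij}`, and `|R|²`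
is constant on `M`. -/
theorem superEinstein_of_order2 {m : ℕ} (hm : 0 < m) {M : Type}
    (V : RiemannModel m M) (Λ₁ Λ₂ : ℝ)
    (h1 : ∀ p i j, V.ric p i j = Λ₁ * kd i j)
    (h2 : ∀ p i j k l, V.symQ p i j k l = Λ₂ * RiemannModel.symG2 i j k l) :
    (∀ p i j, V.RR2 p i j = V.normR2 p / m * kd i j) ∧
      (∀ p q : M, V.normR2 p = V.normR2 q) :=
  superEinstein_of_order2_general V Λ₁ Λ₂ h1 h2
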